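/- Let N ⊆ A₁ and N ⊆ A₂ be unital inclusions of tracial von Neumann algebras with trace-preserving conditional expectations E₁, E₂, and let (M, E) = (A₁,E₁) *_N (A₂,E₂) be the amalgamated free product with trace τ = τ₁∘E. Suppose there are unitaries u₁ ∈ A₁ and u₂, u₃ ∈ A₂ such that: (a) E₁(x)=0 implies E₁(u₁xu₁*)=0 for x ∈ A₁; (b) E₁(u₁) = E₂(u₂) = E₂(u₃) = E₂(u₂*u₃) = 0. Then for every y ∈ M, ‖y − E(y)‖₂ ≤ 14·max_{1≤i≤3} ‖yu_i − u_i y‖₂. -/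

import Mathlib

/-
In `L²(M, τ)` write `y - E y = f + g`, where `f` lies in the span `F` of the
alternating words ending in `A₁° = ker E ∩ A₁` and `g` in the span `G` of those ending in `A₂°`;
`N`, `F`, `G` are mutually orthogonal by freeness.  Let `d` be the largest commutator norm.
Conjugation by `u₁` maps `G` into `F`, so `‖g‖² = ⟪u₁ g u₁*, u₁ y u₁*⟫ ≈ ⟪u₁ g u₁*, f⟫`
gives `‖g‖ ≤ ‖f‖ + d`.  For `i = 2, 3` let `fᵢ` be the `F`-component of `uᵢ* y uᵢ`;
then `‖f - fᵢ‖ ≤ d`, and conjugation by `uᵢ` carries `fᵢ` into `G`, to two orthogonal vectors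
(as `E (u₂* u₃) = 0`) whose inner products with `g` are their squared norms, whence
`‖f₂‖² + ‖f₃‖² ≤ ‖g‖²`.  Combining, `2 (‖f‖ - d)² ≤ (‖f‖ + d)²`, so `‖f‖ + ‖g‖ ≤ 14 d`.
-/

open scoped InnerProductSpace

theorem add_le_fourteen_mul {a b p q d : ℝ} (hb : 0 ≤ b) (hd : 0 ≤ d) (hba : b ≤ a + d)
    (hpq : p ^ 2 + q ^ 2 ≤ b ^ 2) (hp : a - d ≤ p) (hq : a - d ≤ q) : a + b ≤ 14 * d := by
  rcases le_or_gt a d with had | had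
  · linarith
  · have hp2 : (a - d) ^ 2 ≤ p ^ 2 := pow_le_pow_left₀ (by linarith) hp 2
    have hq2 : (a - d) ^ 2 ≤ q ^ 2 := pow_le_pow_left₀ (by linarith) hq 2
    have hb2 : b ^ 2 ≤ (a + d) ^ 2 := pow_le_pow_left₀ hb hba 2
    -- `2 (a - d)² ≤ (a + d)²` forces `a ≤ (3 + 2√2) d < 13 d / 2`
    have : a ≤ 13 * d / 2 := by nlinarith
    linarith

section InnerProductSpace

variable {V : Type*} [NormedAddCommGroup V] [InnerProductSpace ℂ V]

theorem norm_le_norm_add_of_inner_eq_zero {a b : V} (h : ⟪a, b⟫_ℂ = 0) : ‖a‖ ≤ ‖a + b‖ :=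
  nonneg_le_nonneg_of_sq_le_sq (norm_nonneg _) <| by
    rw [norm_add_sq_eq_norm_sq_add_norm_sq_of_inner_eq_zero a b h]
    exact le_add_of_nonneg_right (mul_self_nonneg _)

theorem norm_le_of_inner_eq_inner_self {ξ g : V} (h : ⟪ξ, g⟫_ℂ = ⟪ξ, ξ⟫_ℂ) : ‖ξ‖ ≤ ‖g‖ := by
  have := norm_le_norm_add_of_inner_eq_zero (b := g - ξ) (by rw [inner_sub_right, h, sub_self])
  rwa [add_sub_cancel] at this

variable {N F G : Submodule ℂ V}

theorem norm_le_norm_add_norm_sub_of_mapsTo (hNF : N ⟂ F) (hNG : N ⟂ G) (hFG : F ⟂ G)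
    (U : V ≃ₗᵢ[ℂ] V) (hU : Set.MapsTo U G F) {x n f g : V} (hn : n ∈ N) (hf : f ∈ F)
    (hg : g ∈ G) (hx : x = n + f + g) : ‖g‖ ≤ ‖f‖ + ‖U x - x‖ := by
  have hUg : U g ∈ F := hU hg
  have hgx : ⟪g, x⟫_ℂ = ⟪g, g⟫_ℂ := by
    rw [hx, inner_add_right, inner_add_right, hNG.symm.inner_eq hg hn,
      hFG.symm.inner_eq hg hf, zero_add, zero_add]
  -- `‖g‖² = ⟪U g, U x⟫`, and `U g ∈ F` only sees the `f`-component of `x`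
  have hUgx : ⟪U g, x⟫_ℂ = ⟪U g, f⟫_ℂ := by
    rw [hx, inner_add_right, inner_add_right, hNF.symm.inner_eq hUg hn,
      hFG.inner_eq hUg hg, zero_add, add_zero]
  have hle : ‖g‖ ^ 2 ≤ ‖g‖ * (‖f‖ + ‖U x - x‖) :=
    calc ‖g‖ ^ 2 = RCLike.re ⟪U g, U x⟫_ℂ := by
          rw [LinearIsometryEquiv.inner_map_map, hgx, inner_self_eq_norm_sq_to_K]; norm_cast
      _ = RCLike.re ⟪U g, f⟫_ℂ + RCLike.re ⟪U g, U x - x⟫_ℂ := by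
          rw [inner_sub_right, ← hUgx, map_sub]; ring
      _ ≤ ‖U g‖ * ‖f‖ + ‖U g‖ * ‖U x - x‖ :=
          add_le_add (re_inner_le_norm _ _) (re_inner_le_norm _ _)
      _ = ‖g‖ * (‖f‖ + ‖U x - x‖) := by rw [LinearIsometryEquiv.norm_map]; ring
  nlinarith [norm_nonneg g, norm_nonneg f, norm_nonneg (U x - x)]

theorem exists_norm_sub_le_and_inner_eq_of_mapsTo (hNF : N ⟂ F) (hNG : N ⟂ G) (hFG : F ⟂ G)
    (hspan : N ⊔ F ⊔ G = ⊤) (U : V ≃ₗᵢ[ℂ] V) (hU : Set.MapsTo U F G) {x n f g : V}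
    (hn : n ∈ N) (hf : f ∈ F) (hg : g ∈ G) (hx : x = n + f + g) :
    ∃ f' ∈ F, ‖f - f'‖ ≤ ‖U x - x‖ ∧ ⟪U f', g⟫_ℂ = ⟪U f', U f'⟫_ℂ := by
  obtain ⟨nf', hnf', g', hg', hx'⟩ :=
    Submodule.mem_sup.1 (hspan ▸ Submodule.mem_top (x := U.symm x))
  obtain ⟨n', hn', f', hf', rfl⟩ := Submodule.mem_sup.1 hnf'
  have hUf' : U f' ∈ G := hU hf'
  refine ⟨f', hf', ?_, ?_⟩
  · have horth : ⟪f - f', (n - n') + (g - g')⟫_ℂ = 0 := by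
      rw [inner_add_right, hNF.symm.inner_eq (F.sub_mem hf hf') (N.sub_mem hn hn'),
        hFG.inner_eq (F.sub_mem hf hf') (G.sub_mem hg hg'), add_zero]
    calc ‖f - f'‖ ≤ ‖(f - f') + ((n - n') + (g - g'))‖ :=
          norm_le_norm_add_of_inner_eq_zero horth
      _ = ‖x - U.symm x‖ := by rw [← hx', hx]; congr 1; abel
      _ = ‖U x - x‖ := by rw [← U.norm_map, map_sub, U.apply_symm_apply, norm_sub_rev]
  · calc ⟪U f', g⟫_ℂ = ⟪U f', x⟫_ℂ := by
          rw [hx, inner_add_right, inner_add_right, hNG.symm.inner_eq hUf' hn,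
            hFG.symm.inner_eq hUf' hf, zero_add, zero_add]
      _ = ⟪f', n' + f' + g'⟫_ℂ := by rw [U.inner_map_eq_flip, hx']
      _ = ⟪U f', U f'⟫_ℂ := by
          rw [inner_add_right, inner_add_right, hNF.symm.inner_eq hf' hn', hFG.inner_eq hf' hg',
            zero_add, add_zero, U.inner_map_map]

theorem norm_sub_le_fourteen_mul_max (hNF : N ⟂ F) (hNG : N ⟂ G) (hFG : F ⟂ G)
    (hspan : N ⊔ F ⊔ G = ⊤) (U₁ U₂ U₃ : V ≃ₗᵢ[ℂ] V) (h₁ : Set.MapsTo U₁ G F)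
    (h₂ : Set.MapsTo U₂ F G) (h₃ : Set.MapsTo U₃ F G)
    (h₂₃ : ∀ a ∈ F, ∀ b ∈ F, ⟪U₂ a, U₃ b⟫_ℂ = 0)
    {x n f g : V} (hn : n ∈ N) (hf : f ∈ F) (hg : g ∈ G) (hx : x = n + f + g) :
    ‖x - n‖ ≤ 14 * max ‖U₁ x - x‖ (max ‖U₂ x - x‖ ‖U₃ x - x‖) := by
  set d := max ‖U₁ x - x‖ (max ‖U₂ x - x‖ ‖U₃ x - x‖)
  have hd₁ : ‖U₁ x - x‖ ≤ d := le_max_left _ _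
  have hd₂ : ‖U₂ x - x‖ ≤ d := (le_max_left _ _).trans (le_max_right _ _)
  have hd₃ : ‖U₃ x - x‖ ≤ d := (le_max_right _ _).trans (le_max_right _ _)
  have hgf := norm_le_norm_add_norm_sub_of_mapsTo hNF hNG hFG U₁ h₁ hn hf hg hx
  obtain ⟨f₂, hf₂, hff₂, hi₂⟩ :=
    exists_norm_sub_le_and_inner_eq_of_mapsTo hNF hNG hFG hspan U₂ h₂ hn hf hg hx
  obtain ⟨f₃, hf₃, hff₃, hi₃⟩ :=
    exists_norm_sub_le_and_inner_eq_of_mapsTo hNF hNG hFG hspan U₃ h₃ hn hf hg hx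
  have hbessel : ‖f₂‖ ^ 2 + ‖f₃‖ ^ 2 ≤ ‖g‖ ^ 2 := by
    have h₂₃' := h₂₃ f₂ hf₂ f₃ hf₃
    have h₃₂ : ⟪U₃ f₃, U₂ f₂⟫_ℂ = 0 := by rw [← inner_conj_symm, h₂₃', map_zero]
    have hle : ‖U₂ f₂ + U₃ f₃‖ ≤ ‖g‖ := norm_le_of_inner_eq_inner_self <| by
      rw [inner_add_left, hi₂, hi₃, inner_add_add_self, h₂₃', h₃₂, add_zero, add_zero]
    calc ‖f₂‖ ^ 2 + ‖f₃‖ ^ 2 = ‖U₂ f₂ + U₃ f₃‖ ^ 2 := by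
          rw [sq, sq, sq, norm_add_sq_eq_norm_sq_add_norm_sq_of_inner_eq_zero _ _ h₂₃',
            U₂.norm_map, U₃.norm_map]
      _ ≤ ‖g‖ ^ 2 := pow_le_pow_left₀ (norm_nonneg _) hle 2
  rw [hx, add_assoc, add_sub_cancel_left]
  refine (norm_add_le f g).trans (add_le_fourteen_mul (norm_nonneg g)
    ((norm_nonneg _).trans hd₁) (hgf.trans (by gcongr)) hbessel ?_ ?_)
  · linarith [norm_sub_norm_le f f₂]
  · linarith [norm_sub_norm_le f f₃]

end InnerProductSpace

namespace AmalgamatedFreeProduct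

section Trace

variable {M : Type*} [Ring M] [StarRing M] [Algebra ℂ M] {τ : M →ₗ[ℂ] ℂ}

-- polarization: `τ (x* y) + τ (y* x)` and `i (τ (x* y) - τ (y* x))` are real
theorem conj_trace_star_mul [StarModule ℂ M] (him : ∀ x : M, (τ (star x * x)).im = 0)
    (x y : M) : starRingEnd ℂ (τ (star x * y)) = τ (star y * x) := by
  have h₁ := him (x + y)
  have h₂ := him (x + Complex.I • y)
  simp only [star_add, star_smul, add_mul, mul_add, smul_mul_assoc, mul_smul_comm, map_add,
    map_smul, smul_eq_mul, Complex.star_def, Complex.conj_I, Complex.add_im, Complex.mul_im,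
    Complex.mul_re, Complex.neg_re, Complex.neg_im, Complex.I_re, Complex.I_im, him x, him y]
    at h₁ h₂
  apply Complex.ext <;> simp only [Complex.conj_re, Complex.conj_im] <;> linarith

/-- The inner product of `L²(M, τ)`, whose norm is `‖·‖₂`. -/
abbrev traceInnerCore [StarModule ℂ M] (τ : M →ₗ[ℂ] ℂ)
    (hpos : ∀ x : M, 0 ≤ (τ (star x * x)).re ∧ (τ (star x * x)).im = 0)
    (hfaith : ∀ x : M, τ (star x * x) = 0 → x = 0) : InnerProductSpace.Core ℂ M where
  inner x y := τ (star x * y)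
  conj_inner_symm x y := conj_trace_star_mul (fun z => (hpos z).2) y x
  re_inner_nonneg x := (hpos x).1
  add_left x y z := by rw [star_add, add_mul, map_add]
  smul_left x y r := by rw [star_smul, smul_mul_assoc, map_smul, smul_eq_mul, Complex.star_def]
  definite := hfaith

variable (htr : ∀ x y : M, τ (x * y) = τ (y * x)) {u : M} (hu : u ∈ unitary M)
include htr hu

theorem trace_conj (x : M) : τ (u * x * star u) = τ x := by
  rw [htr, ← mul_assoc, Unitary.star_mul_self_of_mem hu, one_mul]

theorem trace_star_conj_mul_conj (x y : M) :
    τ (star (u * x * star u) * (u * y * star u)) = τ (star x * y) := by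
  have h : star (u * x * star u) * (u * y * star u) =
      u * (star x * (star u * u) * y) * star u := by
    simp only [star_mul, star_star, mul_assoc]
  rw [h, Unitary.star_mul_self_of_mem hu, mul_one, trace_conj htr hu]

theorem trace_star_mul_self_conj_sub (y : M) :
    τ (star (u * y * star u - y) * (u * y * star u - y)) =
      τ (star (y * u - u * y) * (y * u - u * y)) := by
  have h : u * y * star u - y = -((y * u - u * y) * star u) := by
    rw [sub_mul, mul_assoc y, Unitary.mul_star_self_of_mem hu, mul_one, neg_sub]
  rw [h, star_neg, neg_mul_neg, star_mul, star_star,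
    ← trace_conj htr hu (star (y * u - u * y) * (y * u - u * y))]
  simp only [mul_assoc]

end Trace

variable {M : Type*} [Ring M] [StarRing M] [Algebra ℂ M] [StarModule ℂ M]

structure IsAmalgamatedFree (N : StarSubalgebra ℂ M) (A : Bool → StarSubalgebra ℂ M)
    (E : M →ₗ[ℂ] M) : Prop where
  le : ∀ b, N ≤ A b
  E_mem : ∀ x, E x ∈ N
  E_of_mem : ∀ x ∈ N, E x = x
  E_mul_mul : ∀ n ∈ N, ∀ m ∈ N, ∀ x : M, E (n * x * m) = n * E x * m
  E_star : ∀ x, E (star x) = star (E x)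
  E_prod_eq_zero : ∀ (n : ℕ) (f : Fin n → M) (ι : Fin n → Bool),
    (∀ i, f i ∈ A (ι i) ∧ E (f i) = 0) →
    (∀ (i : Fin n) (h : (i : ℕ) + 1 < n), ι i ≠ ι ⟨(i : ℕ) + 1, h⟩) →
    1 ≤ n → E ((List.ofFn f).prod) = 0

/-- Alternating products of letters from `ker E`, starting in `A s` and ending in `A l`. -/
inductive IsAltWord (A : Bool → StarSubalgebra ℂ M) (E : M →ₗ[ℂ] M) : Bool → Bool → M → Prop
  | single {b : Bool} {a : M} : a ∈ A b → E a = 0 → IsAltWord A E b b a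
  | cons {b l : Bool} {a w : M} : a ∈ A b → E a = 0 → IsAltWord A E (!b) l w →
      IsAltWord A E b l (a * w)

/-- `wordSpan A E true` and `wordSpan A E false` are the spaces `F` and `G` of the proof. -/
def wordSpan (A : Bool → StarSubalgebra ℂ M) (E : M →ₗ[ℂ] M) (l : Bool) : Submodule ℂ M :=
  Submodule.span ℂ {w | ∃ s, IsAltWord A E s l w}

variable {N : StarSubalgebra ℂ M} {A : Bool → StarSubalgebra ℂ M} {E : M →ₗ[ℂ] M}
  {s l b : Bool} {a n w z : M}

theorem IsAltWord.mem_wordSpan (hw : IsAltWord A E s l w) : w ∈ wordSpan A E l :=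
  Submodule.subset_span ⟨s, hw⟩

theorem mul_left_mem_of_mem_wordSpan {p : Submodule ℂ M}
    (h : ∀ s w, IsAltWord A E s l w → a * w ∈ p) (hz : z ∈ wordSpan A E l) : a * z ∈ p :=
  (Submodule.span_le (p := p.comap (LinearMap.mulLeft ℂ a))).2
    (by rintro w ⟨s, hw⟩; exact h s w hw) hz

theorem mul_right_mem_of_mem_wordSpan {p : Submodule ℂ M}
    (h : ∀ s w, IsAltWord A E s l w → w * a ∈ p) (hz : z ∈ wordSpan A E l) : z * a ∈ p :=
  (Submodule.span_le (p := p.comap (LinearMap.mulRight ℂ a))).2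
    (by rintro w ⟨s, hw⟩; exact h s w hw) hz

theorem IsAltWord.mul_letter (hw : IsAltWord A E s l w) (ha : a ∈ A (!l)) (hEa : E a = 0) :
    IsAltWord A E s (!l) (w * a) := by
  induction hw with
  | single hb hEb => exact .cons hb hEb (.single ha hEa)
  | cons hb hEb _ ih => rw [mul_assoc]; exact .cons hb hEb (ih ha)

namespace IsAmalgamatedFree

variable (H : IsAmalgamatedFree N A E)
include H

theorem E_mul_left (hn : n ∈ N) (x : M) : E (n * x) = n * E x := by
  simpa [H.E_of_mem 1 N.one_mem] using H.E_mul_mul n hn 1 N.one_mem x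

theorem E_mul_right (hn : n ∈ N) (x : M) : E (x * n) = E x * n := by
  simpa [H.E_of_mem 1 N.one_mem] using H.E_mul_mul 1 N.one_mem n hn x

theorem E_sub_E (x : M) : E (x - E x) = 0 := by
  rw [map_sub, H.E_of_mem _ (H.E_mem x), sub_self]

theorem isAltWord_sub_E (ha : a ∈ A b) : IsAltWord A E b b (a - E a) :=
  .single (sub_mem ha (H.le b (H.E_mem a))) (H.E_sub_E a)

theorem mem_sup_wordSpan (ha : a ∈ A b) :
    a ∈ N.toSubalgebra.toSubmodule ⊔ wordSpan A E b := by
  rw [← add_sub_cancel (E a) a]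
  exact Submodule.add_mem_sup (H.E_mem a) (H.isAltWord_sub_E ha).mem_wordSpan

theorem E_list_prod_eq_zero {L : List (M × Bool)} (hL : L ≠ [])
    (hmem : ∀ p ∈ L, p.1 ∈ A p.2 ∧ E p.1 = 0) (hchain : (L.map Prod.snd).IsChain (· ≠ ·)) :
    E (L.map Prod.fst).prod = 0 := by
  rw [← List.ofFn_getElem_eq_map]
  refine H.E_prod_eq_zero L.length (fun i => L[i].1) (fun i => L[i].2)
    (fun i => hmem _ (L.getElem_mem _)) (fun i hi => ?_) (List.length_pos_iff.2 hL)
  have := List.isChain_iff_getElem.1 hchain i (by simpa using hi)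
  simp only [List.getElem_map] at this
  exact this

theorem E_eq_zero_of_isAltWord (hw : IsAltWord A E s l w) : E w = 0 := by
  suffices ∃ L : List (M × Bool), L ≠ [] ∧ (L.map Prod.snd).head? = some s ∧
      (L.map Prod.snd).IsChain (· ≠ ·) ∧ (∀ p ∈ L, p.1 ∈ A p.2 ∧ E p.1 = 0) ∧
      w = (L.map Prod.fst).prod by
    obtain ⟨L, hL, -, hchain, hmem, rfl⟩ := this
    exact H.E_list_prod_eq_zero hL hmem hchain
  induction hw with
  | @single b a ha hEa =>
      exact ⟨[(a, b)], by simp, by simp, by simp, by simp [ha, hEa], by simp⟩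
  | @cons b l a w ha hEa _ ih =>
      obtain ⟨L, hL, hhead, hchain, hmem, rfl⟩ := ih
      refine ⟨(a, b) :: L, by simp, by simp, ?_, ?_, by simp⟩
      · rw [List.map_cons, List.isChain_cons, hhead]
        simpa using hchain
      · simpa [ha, hEa] using hmem

theorem isAltWord_star (hw : IsAltWord A E s l w) : IsAltWord A E l s (star w) := by
  induction hw with
  | single ha hEa => exact .single (star_mem ha) (by rw [H.E_star, hEa, star_zero])
  | @cons b _ a _ ha hEa _ ih =>
      rw [star_mul]
      simpa only [Bool.not_not] using
        ih.mul_letter (by rw [Bool.not_not]; exact star_mem ha) (by rw [H.E_star, hEa, star_zero])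

theorem isAltWord_mul_left (hn : n ∈ N) (hw : IsAltWord A E s l w) :
    IsAltWord A E s l (n * w) := by
  cases hw with
  | single ha hEa =>
      exact .single (mul_mem (H.le _ hn) ha) (by rw [H.E_mul_left hn, hEa, mul_zero])
  | cons ha hEa hw =>
      rw [← mul_assoc]
      exact .cons (mul_mem (H.le _ hn) ha) (by rw [H.E_mul_left hn, hEa, mul_zero]) hw

theorem isAltWord_mul_right (hw : IsAltWord A E s l w) (hn : n ∈ N) :
    IsAltWord A E s l (w * n) := by
  induction hw with
  | single ha hEa =>
      exact .single (mul_mem ha (H.le _ hn)) (by rw [H.E_mul_right hn, hEa, zero_mul])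
  | cons ha hEa _ ih => rw [mul_assoc]; exact .cons ha hEa ih

theorem mul_mem_wordSpan (ha : a ∈ A b) (hw : IsAltWord A E (!b) l w) :
    a * w ∈ wordSpan A E l := by
  rw [← sub_add_cancel a (E a), add_mul]
  exact add_mem (IsAltWord.cons (sub_mem ha (H.le b (H.E_mem a))) (H.E_sub_E a) hw).mem_wordSpan
    (H.isAltWord_mul_left (H.E_mem a) hw).mem_wordSpan

theorem mul_mem_wordSpan_of_ne (ha : a ∈ A b) (hw : IsAltWord A E s l w) (hbl : b ≠ l) :
    a * w ∈ wordSpan A E l := by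
  rcases Bool.eq_or_eq_not s b with rfl | rfl
  · cases hw with
    | single => exact absurd rfl hbl
    | cons ha₁ _ hw' => rw [← mul_assoc]; exact H.mul_mem_wordSpan (mul_mem ha ha₁) hw'
  · exact H.mul_mem_wordSpan ha hw

theorem mul_mem_sup_wordSpan (ha : a ∈ A b) (hw : IsAltWord A E s l w) :
    a * w ∈ N.toSubalgebra.toSubmodule ⊔ wordSpan A E l := by
  rcases Bool.eq_or_eq_not s b with rfl | rfl
  · cases hw with
    | single ha₁ => exact H.mem_sup_wordSpan (mul_mem ha ha₁)
    | cons ha₁ _ hw' =>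
        rw [← mul_assoc]
        exact Submodule.mem_sup_right (H.mul_mem_wordSpan (mul_mem ha ha₁) hw')
  · exact Submodule.mem_sup_right (H.mul_mem_wordSpan ha hw)

theorem E_eq_zero_of_mem_wordSpan (hz : z ∈ wordSpan A E l) : E z = 0 :=
  (Submodule.span_le (p := LinearMap.ker E)).2
    (by rintro w ⟨s, hw⟩; exact H.E_eq_zero_of_isAltWord hw) hz

theorem E_star_mul_eq_zero_of_isAltWord {v : M} (hv : IsAltWord A E s b v)
    (hz : z ∈ wordSpan A E (!b)) : E (star v * z) = 0 := by
  induction hv generalizing z with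
  | single ha =>
      exact H.E_eq_zero_of_mem_wordSpan <| mul_left_mem_of_mem_wordSpan
        (fun _ _ hw => H.mul_mem_wordSpan_of_ne (star_mem ha) hw (Bool.ne_not.2 rfl)) hz
  | cons ha _ hv ih =>
      obtain ⟨m, hm, z', hz', hmz⟩ := Submodule.mem_sup.1 <| mul_left_mem_of_mem_wordSpan
        (fun _ _ hw => H.mul_mem_sup_wordSpan (star_mem ha) hw) hz
      rw [star_mul, mul_assoc, ← hmz, mul_add, map_add, ih hz',
        H.E_eq_zero_of_isAltWord (H.isAltWord_mul_right (H.isAltWord_star hv) hm), zero_add]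

theorem E_star_mul_eq_zero {x : M} (hx : x ∈ wordSpan A E b) (hz : z ∈ wordSpan A E (!b)) :
    E (star x * z) = 0 := by
  induction hx using Submodule.span_induction with
  | mem v hv => obtain ⟨s, hv⟩ := hv; exact H.E_star_mul_eq_zero_of_isAltWord hv hz
  | zero => rw [star_zero, zero_mul, map_zero]
  | add x y _ _ hx hy => rw [star_add, add_mul, map_add, hx, hy, add_zero]
  | smul c x _ hx => rw [star_smul, smul_mul_assoc, map_smul, hx, smul_zero]

theorem conj_mem_wordSpan {u : M} (hu : u ∈ A b) (hEu : E u = 0) (hz : z ∈ wordSpan A E (!b)) :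
    u * z * star u ∈ wordSpan A E b := by
  have huz : u * z ∈ wordSpan A E (!b) := mul_left_mem_of_mem_wordSpan
    (fun _ _ hw => H.mul_mem_wordSpan_of_ne hu hw (Bool.ne_not.2 rfl)) hz
  refine mul_right_mem_of_mem_wordSpan (fun _ _ hw => ?_) huz
  simpa only [Bool.not_not] using (hw.mul_letter (by rw [Bool.not_not]; exact star_mem hu)
    (by rw [H.E_star, hEu, star_zero])).mem_wordSpan

theorem sup_wordSpan_eq_top (hgen : A true ⊔ A false = ⊤) :
    N.toSubalgebra.toSubmodule ⊔ wordSpan A E true ⊔ wordSpan A E false = ⊤ := by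
  set S := N.toSubalgebra.toSubmodule ⊔ wordSpan A E true ⊔ wordSpan A E false
  have hle : ∀ b, N.toSubalgebra.toSubmodule ⊔ wordSpan A E b ≤ S := by
    rintro (_ | _)
    · exact sup_le (le_sup_left.trans le_sup_left) le_sup_right
    · exact le_sup_left
  have hmul : ∀ b, ∀ a ∈ A b, ∀ z ∈ S, a * z ∈ S := by
    intro b a ha z hz
    obtain ⟨nf, hnf, g, hg, rfl⟩ := Submodule.mem_sup.1 hz
    obtain ⟨n, hn, f, hf, rfl⟩ := Submodule.mem_sup.1 hnf
    rw [mul_add, mul_add]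
    refine add_mem (add_mem (hle b (H.mem_sup_wordSpan (mul_mem ha (H.le b hn)))) ?_) ?_
    · exact hle true (mul_left_mem_of_mem_wordSpan (fun _ _ hw => H.mul_mem_sup_wordSpan ha hw) hf)
    · exact hle false (mul_left_mem_of_mem_wordSpan (fun _ _ hw => H.mul_mem_sup_wordSpan ha hw) hg)
  set X : Set M := (A true : Set M) ∪ A false
  have hadjoin : ∀ y ∈ Algebra.adjoin ℂ (X ∪ star X), ∀ z ∈ S, y * z ∈ S := by
    intro y hy
    induction hy using Algebra.adjoin_induction with
    | mem x hx =>
        rcases hx with (hx | hx) | (hx | hx)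
        · exact hmul true x hx
        · exact hmul false x hx
        · exact hmul true x (star_star x ▸ star_mem hx)
        · exact hmul false x (star_star x ▸ star_mem hx)
    | algebraMap c =>
        intro z hz
        rw [Algebra.algebraMap_eq_smul_one, smul_mul_assoc, one_mul]
        exact S.smul_mem c hz
    | add x y _ _ hx hy => intro z hz; rw [add_mul]; exact add_mem (hx z hz) (hy z hz)
    | mul x y _ _ hx hy => intro z hz; rw [mul_assoc]; exact hx _ (hy z hz)
  have htop : (⊤ : StarSubalgebra ℂ M) ≤ StarAlgebra.adjoin ℂ X := hgen ▸ sup_le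
    (fun x hx => StarAlgebra.subset_adjoin ℂ X (Or.inl hx))
    (fun x hx => StarAlgebra.subset_adjoin ℂ X (Or.inr hx))
  refine eq_top_iff.2 fun y _ => ?_
  have hy : y ∈ Algebra.adjoin ℂ (X ∪ star X) := by
    rw [← StarAlgebra.adjoin_toSubalgebra]
    exact htop (StarSubalgebra.mem_top (x := y))
  simpa using hadjoin y hy 1 (hle true (Submodule.mem_sup_left N.one_mem))

theorem exists_eq_E_add_add (hgen : A true ⊔ A false = ⊤) (y : M) :
    ∃ f ∈ wordSpan A E true, ∃ g ∈ wordSpan A E false, y = E y + f + g := by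
  obtain ⟨nf, hnf, g, hg, rfl⟩ :=
    Submodule.mem_sup.1 (H.sup_wordSpan_eq_top hgen ▸ Submodule.mem_top (x := y))
  obtain ⟨n, hn, f, hf, rfl⟩ := Submodule.mem_sup.1 hnf
  refine ⟨f, hf, g, hg, ?_⟩
  rw [map_add, map_add, H.E_of_mem n hn, H.E_eq_zero_of_mem_wordSpan hf,
    H.E_eq_zero_of_mem_wordSpan hg, add_zero, add_zero]

variable {τ : M →ₗ[ℂ] ℂ}

theorem trace_star_mul_eq_zero (hEτ : ∀ x, τ (E x) = τ x) {x : M}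
    (hx : x ∈ wordSpan A E b) (hz : z ∈ wordSpan A E (!b)) : τ (star x * z) = 0 := by
  rw [← hEτ, H.E_star_mul_eq_zero hx hz, map_zero]

theorem trace_star_mul_eq_zero_of_mem (hEτ : ∀ x, τ (E x) = τ x) (hn : n ∈ N)
    (hz : z ∈ wordSpan A E l) : τ (star n * z) = 0 := by
  rw [← hEτ, H.E_mul_left (star_mem hn), H.E_eq_zero_of_mem_wordSpan hz, mul_zero, map_zero]

theorem trace_star_conj_mul_conj_eq_zero (hEτ : ∀ x, τ (E x) = τ x)
    (htr : ∀ x y : M, τ (x * y) = τ (y * x)) {u v x : M} (hu : u ∈ unitary M) (huA : u ∈ A b)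
    (hvA : v ∈ A b) (huv : E (star u * v) = 0) (hx : x ∈ wordSpan A E (!b))
    (hz : z ∈ wordSpan A E (!b)) :
    τ (star (u * x * star u) * (v * z * star v)) = 0 := by
  -- `w = u* v` conjugates `z` into `wordSpan A E b`, orthogonal to `x`
  have hw := H.conj_mem_wordSpan (mul_mem (star_mem huA) hvA) huv hz
  have h : star (u * x * star u) * (v * z * star v) =
      u * (star x * (star u * v * z * star (star u * v))) * star u := by
    simp only [star_mul, star_star, mul_assoc, Unitary.mul_star_self_of_mem hu, mul_one]
  rw [h, trace_conj htr hu]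
  exact H.trace_star_mul_eq_zero hEτ hx (by simpa only [Bool.not_not] using hw)

end IsAmalgamatedFree

end AmalgamatedFreeProduct

open AmalgamatedFreeProduct

theorem stmt4_general {M : Type*} [Ring M] [StarRing M] [Algebra ℂ M] [StarModule ℂ M]
    (τ : M →ₗ[ℂ] ℂ)
    (htr : ∀ x y : M, τ (x * y) = τ (y * x))
    (hpos : ∀ x : M, 0 ≤ (τ (star x * x)).re ∧ (τ (star x * x)).im = 0)
    (hfaith : ∀ x : M, τ (star x * x) = 0 → x = 0)
    (N A₁ A₂ : StarSubalgebra ℂ M) (hN1 : N ≤ A₁) (hN2 : N ≤ A₂)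
    (hgen : A₁ ⊔ A₂ = ⊤)
    (E : M →ₗ[ℂ] M)
    (hErange : ∀ x : M, E x ∈ N)
    (hEid : ∀ x ∈ N, E x = x)
    (hEbimod : ∀ n ∈ N, ∀ m ∈ N, ∀ x : M, E (n * x * m) = n * E x * m)
    (hEτ : ∀ x : M, τ (E x) = τ x)
    (hEstar : ∀ x : M, E (star x) = star (E x))
    (hfree : ∀ (n : ℕ) (f : Fin n → M) (ι : Fin n → Bool),
      (∀ i, (if ι i then f i ∈ A₁ else f i ∈ A₂) ∧ E (f i) = 0) →
      (∀ (i : Fin n) (h : (i : ℕ) + 1 < n), ι i ≠ ι ⟨(i : ℕ) + 1, h⟩) →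
      1 ≤ n → E ((List.ofFn f).prod) = 0)
    (u₁ u₂ u₃ : M) (hu₁A : u₁ ∈ A₁) (hu₂A : u₂ ∈ A₂) (hu₃A : u₃ ∈ A₂)
    (hu₁ : u₁ * star u₁ = 1 ∧ star u₁ * u₁ = 1)
    (hu₂ : u₂ * star u₂ = 1 ∧ star u₂ * u₂ = 1)
    (hu₃ : u₃ * star u₃ = 1 ∧ star u₃ * u₃ = 1)
    (hb : E u₁ = 0 ∧ E u₂ = 0 ∧ E u₃ = 0 ∧ E (star u₂ * u₃) = 0)
    (y : M) :
    Real.sqrt (τ (star (y - E y) * (y - E y))).re ≤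
      14 * max (Real.sqrt (τ (star (y * u₁ - u₁ * y) * (y * u₁ - u₁ * y))).re)
        (max (Real.sqrt (τ (star (y * u₂ - u₂ * y) * (y * u₂ - u₂ * y))).re)
          (Real.sqrt (τ (star (y * u₃ - u₃ * y) * (y * u₃ - u₃ * y))).re)) := by
  obtain ⟨hE₁, hE₂, hE₃, hE₂₃⟩ := hb
  set A : Bool → StarSubalgebra ℂ M := fun b => if b then A₁ else A₂
  have H : IsAmalgamatedFree N A E :=
    ⟨fun b => by cases b; exacts [hN2, hN1], hErange, hEid, hEbimod, hEstar,
      fun n f ι hf => hfree n f ι fun i => by cases h : ι i <;> simpa [A, h] using hf i⟩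
  let core := traceInnerCore τ hpos hfaith
  let _ : NormedAddCommGroup M := core.toNormedAddCommGroup
  let _ : InnerProductSpace ℂ M := .ofCore core.toCore
  let U : ∀ u ∈ unitary M, M ≃ₗᵢ[ℂ] M := fun u hu =>
    (Unitary.conjStarAlgAut ℂ M ⟨u, hu⟩).toAlgEquiv.toLinearEquiv.isometryOfInner
      (trace_star_conj_mul_conj htr hu)
  have hU : ∀ u (hu : u ∈ unitary M),
      ‖U u hu y - y‖ = √(τ (star (y * u - u * y) * (y * u - u * y))).re := fun u hu =>
    congrArg (fun z : ℂ => √z.re) (trace_star_mul_self_conj_sub htr hu y)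
  have hunitary : ∀ {u : M}, u * star u = 1 ∧ star u * u = 1 → u ∈ unitary M :=
    fun h => ⟨h.2, h.1⟩
  obtain ⟨f, hf, g, hg, hy⟩ := H.exists_eq_E_add_add hgen y
  have key := norm_sub_le_fourteen_mul_max
    (Submodule.isOrtho_iff_inner_eq.2 fun _ hn _ hf => H.trace_star_mul_eq_zero_of_mem hEτ hn hf)
    (Submodule.isOrtho_iff_inner_eq.2 fun _ hn _ hg => H.trace_star_mul_eq_zero_of_mem hEτ hn hg)
    (Submodule.isOrtho_iff_inner_eq.2 fun _ hf _ hg => H.trace_star_mul_eq_zero hEτ hf hg)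
    (H.sup_wordSpan_eq_top hgen) (U u₁ (hunitary hu₁))
    (U u₂ (hunitary hu₂)) (U u₃ (hunitary hu₃))
    (fun _ hg => H.conj_mem_wordSpan (b := true) hu₁A hE₁ hg)
    (fun _ hf => H.conj_mem_wordSpan (b := false) hu₂A hE₂ hf)
    (fun _ hf => H.conj_mem_wordSpan (b := false) hu₃A hE₃ hf)
    (fun _ ha _ hb => H.trace_star_conj_mul_conj_eq_zero (b := false) hEτ htr (hunitary hu₂) hu₂A
      hu₃A hE₂₃ ha hb)
    (H.E_mem y) hf hg hy
  rwa [hU, hU, hU] at key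

/-- Let `(M, E) = (A₁,E₁) *_N (A₂,E₂)` be an amalgamated free product of
tracial von Neumann algebras over `N`, with trace `τ = τ₁ ∘ E` (modeled: `M` is a unital
complex star algebra with faithful positive tracial state `τ`, generated by unital star
subalgebras `A₁, A₂ ⊇ N`, carrying a trace-preserving conditional expectation `E` onto `N`
restricting to `E₁, E₂`, such that alternating words of `E`-kernel elements of `A₁, A₂`
are in the kernel of `E`).  Suppose `u₁ ∈ A₁`, `u₂, u₃ ∈ A₂` are unitaries with
(a) `E₁ x = 0 → E₁(u₁ x u₁*) = 0` for `x ∈ A₁`, and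
(b) `E(u₁) = E(u₂) = E(u₃) = E(u₂* u₃) = 0`.
Then for every `y ∈ M`, `‖y − E y‖₂ ≤ 14 · max_{1≤i≤3} ‖y uᵢ − uᵢ y‖₂`,
where `‖x‖₂ = (τ(x* x))^{1/2}`. -/
theorem stmt4 {M : Type*} [Ring M] [StarRing M] [Algebra ℂ M] [StarModule ℂ M]
    (τ : M →ₗ[ℂ] ℂ)
    (htr : ∀ x y : M, τ (x * y) = τ (y * x))
    (hτ1 : τ 1 = 1)
    (hpos : ∀ x : M, 0 ≤ (τ (star x * x)).re ∧ (τ (star x * x)).im = 0)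
    (hfaith : ∀ x : M, τ (star x * x) = 0 → x = 0)
    (N A₁ A₂ : StarSubalgebra ℂ M) (hN1 : N ≤ A₁) (hN2 : N ≤ A₂)
    (hgen : A₁ ⊔ A₂ = ⊤)
    (E : M →ₗ[ℂ] M)
    (hErange : ∀ x : M, E x ∈ N)
    (hEid : ∀ x ∈ N, E x = x)
    (hEbimod : ∀ n ∈ N, ∀ m ∈ N, ∀ x : M, E (n * x * m) = n * E x * m)
    (hEτ : ∀ x : M, τ (E x) = τ x)
    (hEstar : ∀ x : M, E (star x) = star (E x))
    (hfree : ∀ (n : ℕ) (f : Fin n → M) (ι : Fin n → Bool),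
      (∀ i, (if ι i then f i ∈ A₁ else f i ∈ A₂) ∧ E (f i) = 0) →
      (∀ (i : Fin n) (h : (i : ℕ) + 1 < n), ι i ≠ ι ⟨(i : ℕ) + 1, h⟩) →
      1 ≤ n → E ((List.ofFn f).prod) = 0)
    (u₁ u₂ u₃ : M) (hu₁A : u₁ ∈ A₁) (hu₂A : u₂ ∈ A₂) (hu₃A : u₃ ∈ A₂)
    (hu₁ : u₁ * star u₁ = 1 ∧ star u₁ * u₁ = 1)
    (hu₂ : u₂ * star u₂ = 1 ∧ star u₂ * u₂ = 1)
    (hu₃ : u₃ * star u₃ = 1 ∧ star u₃ * u₃ = 1)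
    (ha : ∀ x ∈ A₁, E x = 0 → E (u₁ * x * star u₁) = 0)
    (hb : E u₁ = 0 ∧ E u₂ = 0 ∧ E u₃ = 0 ∧ E (star u₂ * u₃) = 0)
    (y : M) :
    Real.sqrt (τ (star (y - E y) * (y - E y))).re ≤
      14 * max (Real.sqrt (τ (star (y * u₁ - u₁ * y) * (y * u₁ - u₁ * y))).re)
        (max (Real.sqrt (τ (star (y * u₂ - u₂ * y) * (y * u₂ - u₂ * y))).re)
          (Real.sqrt (τ (star (y * u₃ - u₃ * y) * (y * u₃ - u₃ * y))).re)) :=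
  stmt4_general τ htr hpos hfaith N A₁ A₂ hN1 hN2 hgen E hErange hEid hEbimod hEτ hEstar hfree u₁ u₂
    u₃ hu₁A hu₂A hu₃A hu₁ hu₂ hu₃ hb y
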